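/- arXiv:cs/0410032 — 2 statements merged into one kernel-verified Lean document; each statement's English description precedes it below -/
import Mathlib

section
/- Let M be a DFA with n states over an arbitrary finite alphabet and let L = L(M). Then there exists a DFA with at most n·2^n − 2^(n−1) states that accepts the language L·L. -/
/-!
Read the input with `M` and, alongside, run the subset construction for the second factor:
each time the first component enters a final state, a fresh copy of `M` is started, i.e. the
start state `s₀` joins the set component. Every reachable pair `(q, S)` therefore satisfies
`q ∈ F → s₀ ∈ S`, and when `F` is nonempty this rules out the `|F| · 2^(n-1)` pairs with
`q ∈ F`, `s₀ ∉ S`. When `F` is empty, `L · L = ∅ = L` and `M` itself will do.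
-/

namespace DFA

variable {α σ : Type*}

def restrict (M : DFA α σ) (P : Set σ) (start_mem : M.start ∈ P)
    (step_mem : ∀ q a, q ∈ P → M.step q a ∈ P) : DFA α P where
  step q a := ⟨M.step q a, step_mem q a q.2⟩
  start := ⟨M.start, start_mem⟩
  accept := Subtype.val ⁻¹' M.accept

section restrict

variable (M : DFA α σ) (P : Set σ) (start_mem : M.start ∈ P)
  (step_mem : ∀ q a, q ∈ P → M.step q a ∈ P)

theorem val_evalFrom_restrict (q : P) (w : List α) :
    ((M.restrict P start_mem step_mem).evalFrom q w : σ) = M.evalFrom q w := by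
  induction w generalizing q with
  | nil => rfl
  | cons a w ih => exact ih _

theorem accepts_restrict : (M.restrict P start_mem step_mem).accepts = M.accepts := by
  ext w
  exact Iff.of_eq (congrArg (· ∈ M.accept) (M.val_evalFrom_restrict P start_mem step_mem _ w))

end restrict

open scoped Classical in
noncomputable def square (M : DFA α σ) : DFA α (σ × Finset σ) where
  step p a :=
    let q := M.step p.1 a
    let S := p.2.image (M.step · a)
    (q, if q ∈ M.accept then insert M.start S else S)
  start := (M.start, if M.start ∈ M.accept then {M.start} else ∅)
  accept := {p | ∃ s ∈ p.2, s ∈ M.accept}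

section square

variable (M : DFA α σ)

theorem mem_snd_square_step (p : σ × Finset σ) (a : α) (s : σ) :
    s ∈ (M.square.step p a).2 ↔
      (s = M.start ∧ M.step p.1 a ∈ M.accept) ∨ ∃ t ∈ p.2, M.step t a = s := by
  simp only [square]
  split_ifs with h <;> simp [h]

theorem fst_eval_square (w : List α) : (M.square.eval w).1 = M.eval w := by
  induction w using List.reverseRecOn with
  | nil => rfl
  | append_singleton w a ih =>
    rw [eval_append_singleton, eval_append_singleton, ← ih]
    rfl

theorem mem_snd_eval_square (w : List α) (s : σ) :
    s ∈ (M.square.eval w).2 ↔ ∃ u ∈ M.accepts, ∃ v, u ++ v = w ∧ M.eval v = s := by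
  induction w using List.reverseRecOn generalizing s with
  | nil =>
    simp only [eval_nil, square, List.append_eq_nil_iff]
    split_ifs with h <;> simp [h, mem_accepts, eq_comm]
  | append_singleton w a ih =>
    rw [eval_append_singleton, mem_snd_square_step, fst_eval_square, ← eval_append_singleton]
    simp only [ih]
    constructor
    · rintro (⟨rfl, hw⟩ | ⟨t, ⟨u, hu, v, rfl, rfl⟩, rfl⟩)
      · exact ⟨w ++ [a], hw, [], List.append_nil _, rfl⟩
      · exact ⟨u, hu, v ++ [a], (List.append_assoc ..).symm, eval_append_singleton ..⟩
    · rintro ⟨u, hu, v, huv, rfl⟩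
      rcases List.eq_nil_or_concat' v with rfl | ⟨v, b, rfl⟩
      · rw [List.append_nil] at huv
        exact .inl ⟨rfl, huv ▸ hu⟩
      · obtain ⟨rfl, rfl⟩ := List.append_singleton_inj.mp ((List.append_assoc ..).trans huv)
        exact .inr ⟨M.eval v, ⟨u, hu, v, rfl, rfl⟩, (eval_append_singleton ..).symm⟩

theorem accepts_square : M.square.accepts = M.accepts * M.accepts := by
  ext w
  simp only [mem_accepts, Language.mem_mul]
  show (∃ s ∈ (M.square.eval w).2, s ∈ M.accept) ↔ _
  simp only [mem_snd_eval_square]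
  constructor
  · rintro ⟨_, ⟨u, hu, v, rfl, rfl⟩, hv⟩
    exact ⟨u, hu, v, hv, rfl⟩
  · rintro ⟨u, hu, v, hv, rfl⟩
    exact ⟨_, ⟨u, hu, v, rfl, rfl⟩, hv⟩

theorem square_start_mem : M.square.start.1 ∈ M.accept → M.start ∈ M.square.start.2 := by
  intro h
  simp only [square] at h ⊢
  simp [h]

theorem square_step_mem (p : σ × Finset σ) (a : α) :
    (M.square.step p a).1 ∈ M.accept → M.start ∈ (M.square.step p a).2 := by
  intro h
  simp_all [square]

end square

end DFA

theorem card_subtype_fst_mem_imp_mem_snd {σ : Type*} [Fintype σ] [DecidableEq σ] (F : Set σ)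
    [DecidablePred (· ∈ F)] (s₀ : σ) :
    Fintype.card {p : σ × Finset σ // p.1 ∈ F → s₀ ∈ p.2} =
      Fintype.card σ * 2 ^ Fintype.card σ - Fintype.card F * 2 ^ (Fintype.card σ - 1) := by
  have hcompl : Finset.univ.filter (fun p : σ × Finset σ => ¬(p.1 ∈ F → s₀ ∈ p.2)) =
      F.toFinset ×ˢ (Finset.univ.erase s₀).powerset := by
    ext ⟨q, S⟩
    simp [Finset.subset_erase]
  have hsplit := Finset.card_filter_add_card_filter_not (s := Finset.univ)
    (fun p : σ × Finset σ => p.1 ∈ F → s₀ ∈ p.2)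
  rw [hcompl, Finset.card_product, Finset.card_powerset,
    Finset.card_erase_of_mem (Finset.mem_univ _), Set.toFinset_card, Finset.card_univ,
    Finset.card_univ, Fintype.card_prod, Fintype.card_finset] at hsplit
  rw [Fintype.card_subtype]
  omega

theorem le_mul_two_pow_sub_two_pow_pred {n : ℕ} (hn : 0 < n) : n ≤ n * 2 ^ n - 2 ^ (n - 1) := by
  have hpow : 2 ^ n = 2 * 2 ^ (n - 1) := by rw [← pow_succ']; congr 1; omega
  have hk : 0 < 2 ^ (n - 1) := Nat.two_pow_pos _
  have hn_le : n ≤ n * 2 ^ (n - 1) := Nat.le_mul_of_pos_right n hk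
  have hk_le : 2 ^ (n - 1) ≤ n * 2 ^ (n - 1) := Nat.le_mul_of_pos_left _ hn
  rw [hpow, Nat.mul_left_comm]
  omega

theorem square_state_complexity_upper_bound_general (α : Type)
    (σ : Type) [Fintype σ] (M : DFA α σ) (n : ℕ) (hn : Fintype.card σ = n) :
    ∃ (τ : Type) (_ : Fintype τ) (N : DFA α τ),
      N.accepts = M.accepts * M.accepts ∧
      Fintype.card τ ≤ n * 2 ^ n - 2 ^ (n - 1) := by
  classical
  subst hn
  rcases M.accept.eq_empty_or_nonempty with hF | hF
  · have hL : M.accepts = 0 := by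
      ext w
      simp [DFA.mem_accepts, hF]
    exact ⟨σ, inferInstance, M, by rw [hL, mul_zero],
      le_mul_two_pow_sub_two_pow_pred (Fintype.card_pos_iff.mpr ⟨M.start⟩)⟩
  · refine ⟨_, inferInstance, M.square.restrict {p | p.1 ∈ M.accept → M.start ∈ p.2}
      M.square_start_mem (fun p a _ => M.square_step_mem p a),
      by rw [DFA.accepts_restrict, DFA.accepts_square], ?_⟩
    have : Nonempty M.accept := hF.to_subtype
    calc _ = _ := card_subtype_fst_mem_imp_mem_snd M.accept M.start
      _ ≤ _ := Nat.sub_le_sub_left (Nat.le_mul_of_pos_left _ Fintype.card_pos) _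

/-- Let `M` be a DFA with `n` states over an arbitrary finite alphabet and `L = L(M)`.
Then there exists a DFA with at most `n * 2^n - 2^(n-1)` states accepting `L * L`. -/
theorem square_state_complexity_upper_bound (α : Type) [Fintype α]
    (σ : Type) [Fintype σ] (M : DFA α σ) (n : ℕ) (hn : Fintype.card σ = n) :
    ∃ (τ : Type) (_ : Fintype τ) (N : DFA α τ),
      N.accepts = M.accepts * M.accepts ∧
      Fintype.card τ ≤ n * 2 ^ n - 2 ^ (n - 1) :=
  square_state_complexity_upper_bound_general α σ M n hn
end

section
/- For all integers n ≥ 2 and k ≥ 2, there exists a DFA M with exactly n states over a one-letter (unary) alphabet such that the minimal DFA accepting L(M)^k has exactly k·n − k + 1 states; that is, there exists a DFA with exactly k·n − k + 1 states accepting L(M)^k, and every DFA accepting L(M)^k has at least k·n − k + 1 states. -/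
/-!
Take for `M` the `n`-state counter accepting the words of length at least `n - 1`. Then `L(M)^k`
is the set of words of length at least `k(n - 1)`, which a counter with `k(n - 1) + 1` states
accepts. Conversely, the left quotients of this language by `aⁱ`, `0 ≤ i ≤ k(n - 1)`, are the
pairwise distinct languages of words of length at least `k(n - 1) - i`, so by Myhill–Nerode any
DFA accepting it has at least `k(n - 1) + 1` states.
-/

namespace Language

variable {α : Type*}

def lengthAtLeast (m : ℕ) : Language α := {w | m ≤ w.length}

@[simp]
theorem mem_lengthAtLeast {m : ℕ} {w : List α} : w ∈ lengthAtLeast m ↔ m ≤ w.length :=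
  Iff.rfl

theorem lengthAtLeast_mul (a b : ℕ) :
    lengthAtLeast a * lengthAtLeast b = (lengthAtLeast (a + b) : Language α) := by
  ext w
  simp only [mem_mul, mem_lengthAtLeast]
  constructor
  · rintro ⟨u, hu, v, hv, rfl⟩
    rw [List.length_append]
    omega
  · intro hw
    exact ⟨w.take a, by simp; omega, w.drop a, by simp; omega, w.take_append_drop a⟩

theorem lengthAtLeast_pow (m : ℕ) {k : ℕ} (hk : k ≠ 0) :
    (lengthAtLeast m : Language α) ^ k = lengthAtLeast (k * m) := by
  induction k with
  | zero => contradiction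
  | succ k ih =>
    rcases Nat.eq_zero_or_pos k with rfl | hpos
    · simp
    · rw [pow_succ, ih hpos.ne', lengthAtLeast_mul, Nat.succ_mul]

theorem leftQuotient_lengthAtLeast (m : ℕ) (x : List α) :
    (lengthAtLeast m).leftQuotient x = lengthAtLeast (m - x.length) := by
  ext y
  simp only [mem_leftQuotient, mem_lengthAtLeast, List.length_append]
  omega

theorem lengthAtLeast_injective [Nonempty α] :
    Function.Injective (lengthAtLeast : ℕ → Language α) := by
  obtain ⟨a⟩ := ‹Nonempty α›
  have le_of_eq {m m' : ℕ} (h : lengthAtLeast m = (lengthAtLeast m' : Language α)) : m' ≤ m := by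
    have hmem : List.replicate m a ∈ lengthAtLeast m := by simp
    rw [h] at hmem
    simpa using hmem
  exact fun m m' h => le_antisymm (le_of_eq h.symm) (le_of_eq h)

end Language

namespace DFA

variable {α σ : Type*}

def lengthAtLeast (m : ℕ) : DFA α (Fin (m + 1)) where
  step q _ := ⟨min (q + 1) m, by omega⟩
  start := 0
  accept := {Fin.last m}

theorem lengthAtLeast_evalFrom_val (m : ℕ) (q : Fin (m + 1)) (w : List α) :
    ((lengthAtLeast m).evalFrom q w : ℕ) = min (q + w.length) m := by
  induction w generalizing q with
  | nil =>
    rw [evalFrom_nil, List.length_nil, add_zero]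
    omega
  | cons a w ih =>
    rw [evalFrom_cons, ih]
    simp only [lengthAtLeast, List.length_cons]
    omega

theorem accepts_lengthAtLeast (m : ℕ) :
    (lengthAtLeast m : DFA α _).accepts = Language.lengthAtLeast m := by
  ext w
  have heval := lengthAtLeast_evalFrom_val (α := α) m 0 w
  simp only [mem_accepts, lengthAtLeast, Set.mem_singleton_iff, Fin.ext_iff, Fin.val_last,
    Language.mem_lengthAtLeast]
  simp only [eval, lengthAtLeast, Fin.val_zero, zero_add] at heval ⊢
  omega

theorem card_le_of_injective_leftQuotient [Fintype σ] {ι : Type*} [Fintype ι] (M : DFA α σ)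
    {f : ι → List α} (hf : Function.Injective (M.accepts.leftQuotient ∘ f)) :
    Fintype.card ι ≤ Fintype.card σ := by
  rw [Language.leftQuotient_accepts, Function.comp_assoc] at hf
  exact Fintype.card_le_of_injective _ hf.of_comp

theorem card_le_of_accepts_eq_lengthAtLeast [Nonempty α] [Fintype σ] (M : DFA α σ) {c : ℕ}
    (h : M.accepts = Language.lengthAtLeast c) : c + 1 ≤ Fintype.card σ := by
  obtain ⟨a⟩ := ‹Nonempty α›
  have hinj : Function.Injective
      (M.accepts.leftQuotient ∘ fun i : Fin (c + 1) => List.replicate i a) := by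
    intro i j hij
    simp only [Function.comp_apply, h, Language.leftQuotient_lengthAtLeast,
      List.length_replicate] at hij
    have := Language.lengthAtLeast_injective hij
    omega
  simpa using M.card_le_of_injective_leftQuotient hinj

end DFA

/-- For all `n ≥ 2` and `k ≥ 2`, there exists a DFA `M` with exactly `n` states over a
one-letter alphabet (here `Fin 1`) such that the minimal DFA accepting `L(M)^k` has
exactly `k*n - k + 1` states: some DFA with exactly `k*n - k + 1` states accepts
`L(M)^k`, and every DFA accepting `L(M)^k` has at least `k*n - k + 1` states. -/
theorem unary_power_state_complexity_exact (n k : ℕ) (hn : 2 ≤ n) (hk : 2 ≤ k) :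
    ∃ (σ : Type) (_ : Fintype σ) (M : DFA (Fin 1) σ),
      Fintype.card σ = n ∧
      (∃ (τ : Type) (_ : Fintype τ) (N : DFA (Fin 1) τ),
        N.accepts = M.accepts ^ k ∧ Fintype.card τ = k * n - k + 1) ∧
      (∀ (τ : Type) [Fintype τ] (N : DFA (Fin 1) τ),
        N.accepts = M.accepts ^ k →
        k * n - k + 1 ≤ Fintype.card τ) := by
  have hpow : (DFA.lengthAtLeast (n - 1) : DFA (Fin 1) _).accepts ^ k =
      Language.lengthAtLeast (k * (n - 1)) := by
    rw [DFA.accepts_lengthAtLeast, Language.lengthAtLeast_pow _ (by omega)]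
  have hcard : k * (n - 1) + 1 = k * n - k + 1 := by rw [Nat.mul_sub_one]
  refine ⟨Fin (n - 1 + 1), inferInstance, DFA.lengthAtLeast (n - 1), by simp; omega,
    ⟨Fin (k * (n - 1) + 1), inferInstance, DFA.lengthAtLeast _, ?_, by simp [hcard]⟩, ?_⟩
  · rw [hpow, DFA.accepts_lengthAtLeast]
  · intro τ _ N hN
    exact hcard ▸ N.card_le_of_accepts_eq_lengthAtLeast (hN.trans hpow)
end
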